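/- arXiv:2502.01533 — 6 statements merged into one kernel-verified Lean document; each statement's English description precedes it below -/
import Mathlib

section
/- For all real x₁, x₂, the Euclidean inner product of the layer-normalized trigonometric embeddings satisfies LN(E_trig(x₁)) · LN(E_trig(x₂)) = 4·cos(x₁ − x₂). -/
/-- Population mean of a vector `v ∈ ℝ^d`: `μ(v) = (1/d)·Σᵢ vᵢ`. -/
noncomputable def popMean {d : ℕ} (v : Fin d → ℝ) : ℝ := (∑ i, v i) / d

/-- Population standard deviation of a vector `v ∈ ℝ^d`:
`σ(v) = √((1/d)·Σᵢ (vᵢ − μ(v))²)`. -/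
noncomputable def popStd {d : ℕ} (v : Fin d → ℝ) : ℝ :=
  Real.sqrt ((∑ i, (v i - popMean v) ^ 2) / d)

/-- LayerNorm with unit gain and zero bias: `LN(v) = (v − μ(v)·𝟙)/σ(v)`. -/
noncomputable def layerNorm {d : ℕ} (v : Fin d → ℝ) : Fin d → ℝ :=
  fun i => (v i - popMean v) / popStd v

/-- Trigonometric positional embedding `E_trig(x) = (cos x, −cos x, sin x, −sin x)`. -/
noncomputable def Etrig (x : ℝ) : Fin 4 → ℝ :=
  ![Real.cos x, -Real.cos x, Real.sin x, -Real.sin x]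

/-!
Each `E_trig(x)` has mean zero, so LayerNorm only rescales it by `1/σ`, and its squared entries
sum to `2`, so `σ = √(1/2)` independently of `x`. The dot product of the normalized embeddings is
therefore `2` times that of the raw ones, which is `2·cos(x₁ − x₂)` by the subtraction formula.
-/

section LayerNorm

variable {d : ℕ}

lemma popStd_of_popMean_eq_zero {v : Fin d → ℝ} (hv : popMean v = 0) :
    popStd v = Real.sqrt ((∑ i, v i ^ 2) / d) := by
  simp only [popStd, hv, sub_zero]

lemma layerNorm_of_popMean_eq_zero {v : Fin d → ℝ} (hv : popMean v = 0) (i : Fin d) :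
    layerNorm v i = v i / popStd v := by
  simp only [layerNorm, hv, sub_zero]

lemma sum_layerNorm_mul_layerNorm_of_popMean_eq_zero {u v : Fin d → ℝ}
    (hu : popMean u = 0) (hv : popMean v = 0) :
    ∑ i, layerNorm u i * layerNorm v i = (∑ i, u i * v i) / (popStd u * popStd v) := by
  simp only [layerNorm_of_popMean_eq_zero hu, layerNorm_of_popMean_eq_zero hv,
    div_mul_div_comm, Finset.sum_div]

end LayerNorm

lemma popMean_Etrig (x : ℝ) : popMean (Etrig x) = 0 := by
  simp [popMean, Etrig, Fin.sum_univ_four]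

lemma sum_Etrig_mul_Etrig (x₁ x₂ : ℝ) :
    ∑ i, Etrig x₁ i * Etrig x₂ i = 2 * Real.cos (x₁ - x₂) := by
  simp only [Etrig, Fin.sum_univ_four, Matrix.cons_val_zero, Matrix.cons_val_one,
    Matrix.cons_val, mul_neg, neg_mul, neg_neg, Real.cos_sub]
  ring

lemma popStd_Etrig (x : ℝ) : popStd (Etrig x) = Real.sqrt (1 / 2) := by
  have hsq : ∑ i, Etrig x i ^ 2 = 2 := by
    simpa [sq] using sum_Etrig_mul_Etrig x x
  rw [popStd_of_popMean_eq_zero (popMean_Etrig x), hsq]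
  norm_num

/-- The Euclidean inner product of the layer-normalized trigonometric embeddings
satisfies `LN(E_trig(x₁)) · LN(E_trig(x₂)) = 4·cos(x₁ − x₂)`. -/
theorem etrig_layerNorm_dot (x₁ x₂ : ℝ) :
    ∑ i, layerNorm (Etrig x₁) i * layerNorm (Etrig x₂) i = 4 * Real.cos (x₁ - x₂) := by
  rw [sum_layerNorm_mul_layerNorm_of_popMean_eq_zero (popMean_Etrig x₁) (popMean_Etrig x₂),
    sum_Etrig_mul_Etrig, popStd_Etrig, popStd_Etrig, Real.mul_self_sqrt (by norm_num)]
  ring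
end

section
/- As (x, y) → (0, 0) in ℝ², the difference 4(1 + xy)/√((1 + x²)(1 + y²)) − (4 − 2(x − y)²) is O(‖(x, y)‖⁴); that is, the dot product of layer-normalized linear embeddings equals the Gaussian-filter quadratic −2(x − y)² + 4 up to fourth-order error in the coordinates. -/
open Asymptotics Filter


set_option maxHeartbeats 1000000 in
private lemma elin_Nbound (x y : ℝ) (hx2 : x^2 ≤ 1/4) (hy2 : y^2 ≤ 1/4) :
    |16*(1+x*y)^2 - (4-2*(x-y)^2)^2 * ((1+x^2)*(1+y^2))| ≤ 96 * (x^2+y^2)^2 := by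
  have hNid : 16*(1+x*y)^2 - (4-2*(x-y)^2)^2 * ((1+x^2)*(1+y^2))
      = 16*(x-y)^2*(x^2+y^2+x^2*y^2) - 4*(x-y)^4*(1+x^2+y^2+x^2*y^2) := by ring
  rw [hNid, abs_le]
  have ht1 : (x-y)^2 ≤ 2*(x^2+y^2) := by nlinarith [sq_nonneg (x+y)]
  have ht3 : (x-y)^4 ≤ 4*(x^2+y^2)^2 := by nlinarith [sq_nonneg (x-y), sq_nonneg (x^2+y^2)]
  have hq1 : 0 ≤ (x-y)^2 := sq_nonneg _
  have hq2 : 0 ≤ (x-y)^4 := by positivity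
  have hq4 : 1+x^2+y^2+x^2*y^2 ≤ 2 := by nlinarith
  have hq5 : x^2+y^2+x^2*y^2 ≤ (5/4)*(x^2+y^2) := by nlinarith [sq_nonneg x, sq_nonneg y]
  constructor
  · nlinarith [mul_le_mul ht3 hq4 (by positivity) (by positivity),
      mul_nonneg hq1 (by positivity : (0:ℝ) ≤ x^2+y^2+x^2*y^2), sq_nonneg (x^2+y^2)]
  · nlinarith [mul_le_mul ht1 hq5 (by positivity) (by positivity),
      mul_nonneg hq2 (by positivity : (0:ℝ) ≤ 1+x^2+y^2+x^2*y^2), sq_nonneg (x^2+y^2)]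

set_option maxHeartbeats 1000000 in
/-- As `(x, y) → (0, 0)` in `ℝ²`, the difference
`4(1 + xy)/√((1 + x²)(1 + y²)) − (4 − 2(x − y)²)` is `O(‖(x, y)‖⁴)`:
the dot product of layer-normalized linear embeddings equals the
Gaussian-filter quadratic `−2(x − y)² + 4` up to fourth-order error. -/
theorem elin_dot_isBigO_fourth_order :
    (fun p : ℝ × ℝ =>
        4 * (1 + p.1 * p.2) / Real.sqrt ((1 + p.1 ^ 2) * (1 + p.2 ^ 2)) -
          (4 - 2 * (p.1 - p.2) ^ 2)) =O[nhds (0 : ℝ × ℝ)]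
      (fun p : ℝ × ℝ => ‖p‖ ^ 4) := by
  rw [Asymptotics.isBigO_iff]
  refine ⟨80, ?_⟩
  filter_upwards [Metric.ball_mem_nhds (0 : ℝ × ℝ) (by norm_num : (0:ℝ) < 1/2)] with p hp
  obtain ⟨x, y⟩ := p
  rw [Metric.mem_ball, dist_zero_right, Prod.norm_def] at hp
  simp only [Real.norm_eq_abs] at hp
  have hx : |x| < 1/2 := lt_of_le_of_lt (le_max_left _ _) hp
  have hy : |y| < 1/2 := lt_of_le_of_lt (le_max_right _ _) hp
  have hx2 : x^2 ≤ 1/4 := by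
    have := abs_nonneg x; nlinarith [sq_abs x]
  have hy2 : y^2 ≤ 1/4 := by
    have := abs_nonneg y; nlinarith [sq_abs y]
  have hxy : x*y ≥ -(1/4) := by nlinarith [sq_nonneg (x+y)]
  set s := Real.sqrt ((1 + x ^ 2) * (1 + y ^ 2)) with hs
  have hPnn : (0:ℝ) ≤ (1 + x ^ 2) * (1 + y ^ 2) := by positivity
  have hs2 : s ^ 2 = (1 + x ^ 2) * (1 + y ^ 2) := Real.sq_sqrt hPnn
  have hs1 : 1 ≤ s := by
    rw [hs]
    have : (1:ℝ) ≤ (1 + x ^ 2) * (1 + y ^ 2) := by nlinarith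
    nlinarith [Real.sqrt_le_sqrt this, Real.sqrt_one]
  have hspos : 0 < s := lt_of_lt_of_le one_pos hs1
  have hB : 2 ≤ 4 - 2*(x-y)^2 := by nlinarith
  have hA : 3 ≤ 4*(1+x*y) := by nlinarith
  have hden : 5 ≤ 4*(1+x*y) + (4 - 2*(x-y)^2) * s := by nlinarith
  have hne : s ≠ 0 := ne_of_gt hspos
  have hne2 : 4*(1+x*y) + (4-2*(x-y)^2)*s ≠ 0 := by nlinarith
  have h3 : (4*(1+x*y) - (4-2*(x-y)^2)*s) * (4*(1+x*y) + (4-2*(x-y)^2)*s)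
      = 16*(1+x*y)^2 - (4-2*(x-y)^2)^2 * ((1+x^2)*(1+y^2)) := by
    linear_combination (-(4-2*(x-y)^2)^2) * hs2
  have h4 : 4*(1+x*y) - (4-2*(x-y)^2)*s
      = (16*(1+x*y)^2 - (4-2*(x-y)^2)^2 * ((1+x^2)*(1+y^2)))
        / (4*(1+x*y) + (4-2*(x-y)^2)*s) := eq_div_of_mul_eq hne2 h3
  have hkey : 4*(1+x*y)/s - (4 - 2*(x-y)^2)
      = (16*(1+x*y)^2 - (4-2*(x-y)^2)^2 * ((1+x^2)*(1+y^2)))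
        / ((4*(1+x*y) + (4-2*(x-y)^2)*s) * s) := by
    rw [← div_div, ← h4]
    field_simp
  simp only [Prod.norm_def, Real.norm_eq_abs]
  set m := max |x| |y| with hm
  have hmnn : 0 ≤ m := le_trans (abs_nonneg x) (le_max_left _ _)
  have hxm : x^2 ≤ m^2 := by
    have : |x| ≤ m := le_max_left _ _
    nlinarith [sq_abs x, abs_nonneg x]
  have hym : y^2 ≤ m^2 := by
    have : |y| ≤ m := le_max_right _ _
    nlinarith [sq_abs y, abs_nonneg y]
  rw [hkey, abs_div]
  have hNbound : |16*(1+x*y)^2 - (4-2*(x-y)^2)^2 * ((1+x^2)*(1+y^2))|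
      ≤ 96 * (x^2+y^2)^2 := elin_Nbound x y hx2 hy2
  have hDabs : 5 ≤ |(4*(1+x*y) + (4-2*(x-y)^2)*s) * s| := by
    rw [abs_of_pos (by nlinarith)]
    nlinarith
  have step : |16*(1+x*y)^2 - (4-2*(x-y)^2)^2 * ((1+x^2)*(1+y^2))|
      / |(4*(1+x*y) + (4-2*(x-y)^2)*s) * s| ≤ 96 * (x^2+y^2)^2 / 5 :=
    div_le_div₀ (by positivity) hNbound (by norm_num) hDabs
  refine le_trans step ?_
  have habs : |m^4| = m^4 := abs_of_nonneg (by positivity)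
  rw [habs]
  have hT : x^2+y^2 ≤ 2*m^2 := by linarith
  have hT4 : (x^2+y^2)^2 ≤ 4*m^4 := by nlinarith [sq_nonneg x, sq_nonneg y, sq_nonneg m]
  have hm4 : (0:ℝ) ≤ m^4 := by positivity
  linarith
end

section
/- For all fixed real x, y, the rescaled dot product of layer-normalized linear embeddings satisfies lim_{c → ∞} [ c·LN(E_lin(x/c)) · c·LN(E_lin(y/c)) − 4c² ] = −2(x − y)²; equivalently, lim_{c → ∞} [ 4c²(c² + xy)/√((c² + x²)(c² + y²)) − 4c² ] = −2(x − y)². -/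
/-- Linear positional embedding `E_lin(x) = (1, −1, x, −x)`. -/
noncomputable def Elin (x : ℝ) : Fin 4 → ℝ := ![1, -1, x, -x]

open Filter Real Topology

lemma popMean_Elin (z : ℝ) : popMean (Elin z) = 0 := by
  simp [popMean, Elin, Fin.sum_univ_four]

lemma popStd_Elin (z : ℝ) : popStd (Elin z) = √((1 + z ^ 2) / 2) := by
  rw [popStd, popMean_Elin]
  simp only [sub_zero, Fin.sum_univ_four, Elin]
  congr 1
  simp only [Matrix.cons_val_zero, one_pow, Matrix.cons_val_one, even_two, Even.neg_pow,
    Matrix.cons_val, Nat.cast_ofNat]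
  ring

lemma sum_Elin_mul (x y : ℝ) : ∑ i, Elin x i * Elin y i = 2 * (1 + x * y) := by
  simp only [Elin, Fin.sum_univ_four, Matrix.cons_val_zero, mul_one, Matrix.cons_val_one, mul_neg,
    neg_neg, Matrix.cons_val, neg_mul]
  ring

lemma sum_layerNorm_Elin_mul (x y : ℝ) :
    ∑ i, layerNorm (Elin x) i * layerNorm (Elin y) i =
      4 * ((1 + x * y) / √((1 + x ^ 2) * (1 + y ^ 2))) := by
  have hstd : popStd (Elin x) * popStd (Elin y) = √((1 + x ^ 2) * (1 + y ^ 2)) / 2 := by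
    rw [popStd_Elin, popStd_Elin, ← sqrt_mul (by positivity), div_mul_div_comm,
      sqrt_div' _ (by norm_num : (0 : ℝ) ≤ 2 * 2), sqrt_mul_self zero_le_two]
  simp only [layerNorm, popMean_Elin, sub_zero, div_mul_div_comm, ← Finset.sum_div, sum_Elin_mul,
    hstd]
  ring

/-- The cosine similarity of `E_lin(x √u)` and `E_lin(y √u)`. -/
noncomputable def elinCosine (x y u : ℝ) : ℝ :=
  (1 + x * y * u) / √((1 + x ^ 2 * u) * (1 + y ^ 2 * u))

lemma hasDerivAt_elinCosine (x y : ℝ) : HasDerivAt (elinCosine x y) (-(x - y) ^ 2 / 2) 0 := by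
  have hlin (a : ℝ) : HasDerivAt (fun u : ℝ => 1 + a * u) a 0 := by
    simpa using ((hasDerivAt_id (0 : ℝ)).const_mul a).const_add 1
  have hrad := ((hlin (x ^ 2)).mul (hlin (y ^ 2))).sqrt (by simp)
  exact ((hlin (x * y)).div hrad (by simp)).congr_deriv (by simp; ring)

lemma sum_mul_layerNorm_Elin_div (x y c : ℝ) :
    ∑ i, (c * layerNorm (Elin (x / c)) i) * (c * layerNorm (Elin (y / c)) i) =
      4 * c ^ 2 * elinCosine x y (c ^ 2)⁻¹ := by
  simp only [mul_mul_mul_comm c, ← Finset.mul_sum, sum_layerNorm_Elin_mul, elinCosine]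
  ring_nf

lemma mul_div_sqrt_eq_elinCosine (x y : ℝ) {c : ℝ} (hc : c ≠ 0) :
    4 * c ^ 2 * (c ^ 2 + x * y) / √((c ^ 2 + x ^ 2) * (c ^ 2 + y ^ 2)) =
      4 * c ^ 2 * elinCosine x y (c ^ 2)⁻¹ := by
  have hc2 : 0 < c ^ 2 := by positivity
  have hrad : (1 + x ^ 2 * (c ^ 2)⁻¹) * (1 + y ^ 2 * (c ^ 2)⁻¹) =
      (c ^ 2 + x ^ 2) * (c ^ 2 + y ^ 2) / (c ^ 2) ^ 2 := by
    field_simp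
  rw [elinCosine, hrad, sqrt_div' _ (by positivity), sqrt_sq hc2.le]
  field_simp

lemma HasDerivAt.tendsto_sq_mul_sub_comp_inv_sq {g : ℝ → ℝ} {g' : ℝ} (h : HasDerivAt g g' 0) :
    Tendsto (fun c : ℝ => c ^ 2 * (g (c ^ 2)⁻¹ - g 0)) atTop (𝓝 g') := by
  have hu : Tendsto (fun c : ℝ => (c ^ 2)⁻¹) atTop (𝓝[>] 0) :=
    tendsto_inv_atTop_nhdsGT_zero.comp (tendsto_pow_atTop two_ne_zero)
  refine (h.tendsto_slope_zero_right.comp hu).congr fun c => ?_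
  simp

/-- For all fixed real `x, y`, the rescaled dot product of layer-normalized
linear embeddings satisfies
`lim_{c → ∞} [ c·LN(E_lin(x/c)) · c·LN(E_lin(y/c)) − 4c² ] = −2(x − y)²`;
equivalently,
`lim_{c → ∞} [ 4c²(c² + xy)/√((c² + x²)(c² + y²)) − 4c² ] = −2(x − y)²`. -/
theorem elin_rescaled_dot_tendsto (x y : ℝ) :
    Filter.Tendsto
      (fun c : ℝ =>
        (∑ i, (c * layerNorm (Elin (x / c)) i) * (c * layerNorm (Elin (y / c)) i)) -
          4 * c ^ 2)
      Filter.atTop (nhds (-2 * (x - y) ^ 2)) ∧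
    Filter.Tendsto
      (fun c : ℝ =>
        4 * c ^ 2 * (c ^ 2 + x * y) / Real.sqrt ((c ^ 2 + x ^ 2) * (c ^ 2 + y ^ 2)) -
          4 * c ^ 2)
      Filter.atTop (nhds (-2 * (x - y) ^ 2)) := by
  have hformula : Tendsto (fun c : ℝ => 4 * c ^ 2 * (c ^ 2 + x * y) /
      √((c ^ 2 + x ^ 2) * (c ^ 2 + y ^ 2)) - 4 * c ^ 2) atTop (𝓝 (-2 * (x - y) ^ 2)) := by
    rw [show -2 * (x - y) ^ 2 = 4 * (-(x - y) ^ 2 / 2) by ring]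
    refine ((hasDerivAt_elinCosine x y).tendsto_sq_mul_sub_comp_inv_sq.const_mul 4).congr' ?_
    filter_upwards [eventually_ne_atTop 0] with c hc
    rw [mul_div_sqrt_eq_elinCosine x y hc, show elinCosine x y 0 = 1 by simp [elinCosine]]
    ring
  refine ⟨hformula.congr' ?_, hformula⟩
  filter_upwards [eventually_ne_atTop 0] with c hc
  rw [sum_mul_layerNorm_Elin_div, mul_div_sqrt_eq_elinCosine x y hc]
end

section
/- For all real x₁, x₂, the Euclidean inner product of the layer-normalized quadratic embeddings satisfies LN(E_quad(x₁)) · LN(E_quad(x₂)) = [4(1 − x₁²/2)(1 − x₂²/2) + 4x₁x₂] / √((1 + x₁⁴/4)(1 + x₂⁴/4)) = [4 − 2(x₁ − x₂)² + x₁²x₂²] / √((1 + x₁⁴/4)(1 + x₂⁴/4)). -/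
/-- Quadratic positional embedding `E_quad(x) = (1 − x²/2, −(1 − x²/2), x, −x)`. -/
noncomputable def Equad (x : ℝ) : Fin 4 → ℝ :=
  ![1 - x ^ 2 / 2, -(1 - x ^ 2 / 2), x, -x]

/-! Both embeddings have mean zero, so LayerNorm only rescales them by their standard
deviations `√((1 + x⁴/4)/2)`; the inner product is therefore `⟨E_quad(x₁), E_quad(x₂)⟩`
divided by the product of the two standard deviations. -/

theorem sum_layerNorm_mul {d : ℕ} (v w : Fin d → ℝ) :
    ∑ i, layerNorm v i * layerNorm w i =
      (∑ i, (v i - popMean v) * (w i - popMean w)) / (popStd v * popStd w) := by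
  simp only [layerNorm, div_mul_div_comm, Finset.sum_div]

theorem popMean_Equad (x : ℝ) : popMean (Equad x) = 0 := by
  simp [popMean, Equad, Fin.sum_univ_four]

theorem popStd_Equad (x : ℝ) : popStd (Equad x) = Real.sqrt ((1 + x ^ 4 / 4) / 2) := by
  rw [popStd, popMean_Equad]
  congr 1
  simp only [Equad, Fin.sum_univ_four, sub_zero, Matrix.cons_val_zero,
    Matrix.cons_val_one, Matrix.cons_val_two, Matrix.cons_val_three, Matrix.head_cons,
    Matrix.tail_cons]
  push_cast
  ring

theorem sum_Equad_mul (x₁ x₂ : ℝ) :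
    ∑ i, Equad x₁ i * Equad x₂ i =
      2 * (1 - x₁ ^ 2 / 2) * (1 - x₂ ^ 2 / 2) + 2 * (x₁ * x₂) := by
  simp only [Equad, Fin.sum_univ_four, Matrix.cons_val_zero,
    Matrix.cons_val_one, Matrix.cons_val_two, Matrix.cons_val_three, Matrix.head_cons,
    Matrix.tail_cons]
  ring

theorem sqrt_half_mul_sqrt_half {a b : ℝ} (ha : 0 ≤ a) :
    Real.sqrt (a / 2) * Real.sqrt (b / 2) = Real.sqrt (a * b) / 2 := by
  rw [← Real.sqrt_mul (div_nonneg ha zero_le_two), div_mul_div_comm,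
    Real.sqrt_div' _ (by norm_num : (0 : ℝ) ≤ 2 * 2), Real.sqrt_mul_self zero_le_two]

/-- The Euclidean inner product of the layer-normalized quadratic embeddings
satisfies
`LN(E_quad(x₁)) · LN(E_quad(x₂)) = [4(1 − x₁²/2)(1 − x₂²/2) + 4x₁x₂] / √((1 + x₁⁴/4)(1 + x₂⁴/4))`
`= [4 − 2(x₁ − x₂)² + x₁²x₂²] / √((1 + x₁⁴/4)(1 + x₂⁴/4))`. -/
theorem equad_layerNorm_dot (x₁ x₂ : ℝ) :
    (∑ i, layerNorm (Equad x₁) i * layerNorm (Equad x₂) i =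
      (4 * (1 - x₁ ^ 2 / 2) * (1 - x₂ ^ 2 / 2) + 4 * (x₁ * x₂)) /
        Real.sqrt ((1 + x₁ ^ 4 / 4) * (1 + x₂ ^ 4 / 4))) ∧
    (∑ i, layerNorm (Equad x₁) i * layerNorm (Equad x₂) i =
      (4 - 2 * (x₁ - x₂) ^ 2 + x₁ ^ 2 * x₂ ^ 2) /
        Real.sqrt ((1 + x₁ ^ 4 / 4) * (1 + x₂ ^ 4 / 4))) := by
  have hdot : ∑ i, layerNorm (Equad x₁) i * layerNorm (Equad x₂) i =
      (4 * (1 - x₁ ^ 2 / 2) * (1 - x₂ ^ 2 / 2) + 4 * (x₁ * x₂)) /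
        Real.sqrt ((1 + x₁ ^ 4 / 4) * (1 + x₂ ^ 4 / 4)) := by
    rw [sum_layerNorm_mul, popMean_Equad, popMean_Equad, popStd_Equad, popStd_Equad,
      sqrt_half_mul_sqrt_half (by positivity)]
    simp only [sub_zero, sum_Equad_mul]
    rw [div_div_eq_mul_div]
    ring
  exact ⟨hdot, hdot.trans (by ring)⟩
end

section
/- As x → 0, the difference √2/√(1 + x⁴/4) − √2·(1 − x⁴/8) is O(x⁸); that is, the reciprocal LayerNorm standard deviation 1/σ(E_quad(x)) equals √2·(1 − x⁴/8) up to eighth-order error, a strictly better approximation order than the O(x⁴) error obtained for the linear embedding E_lin. -/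
/-!
Multiplying by the conjugate `1 + √(1 + t) (1 - t/2)` shows that `1/√(1 + t) - (1 - t/2)` is
`t²` times a function continuous at `0`, hence `O(t²)`; substituting `t = x⁴/4` gives `O(x⁸)`.
-/

open Asymptotics Filter

lemma inv_sqrt_one_add_sub_eq {t : ℝ} (ht₁ : -1 < t) (ht₂ : t < 2) :
    (√(1 + t))⁻¹ - (1 - t / 2) =
      t ^ 2 * ((3 - t) / (4 * √(1 + t) * (1 + √(1 + t) * (1 - t / 2)))) := by
  have hs : 0 < √(1 + t) := Real.sqrt_pos.2 (by linarith)
  have hs_sq : √(1 + t) ^ 2 = 1 + t := Real.sq_sqrt (by linarith)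
  have hconj : 0 < 1 + √(1 + t) * (1 - t / 2) := by nlinarith
  rw [mul_div_assoc', eq_div_iff (mul_pos (by positivity) hconj).ne']
  field_simp
  linear_combination -4 * (t - 2) ^ 2 * hs_sq

lemma inv_sqrt_one_add_sub_isBigO :
    (fun t : ℝ => (√(1 + t))⁻¹ - (1 - t / 2)) =O[nhds 0] fun t => t ^ 2 := by
  have hcont : ContinuousAt
      (fun t : ℝ => (3 - t) / (4 * √(1 + t) * (1 + √(1 + t) * (1 - t / 2)))) 0 :=
    ContinuousAt.div (by fun_prop) (by fun_prop) (by norm_num)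
  refine ((isBigO_refl (fun t : ℝ => t ^ 2) _).mul (hcont.tendsto.isBigO_one ℝ)).congr'
    ?_ (by simp)
  filter_upwards [Ioo_mem_nhds (by norm_num : (-1 : ℝ) < 0) (by norm_num : (0 : ℝ) < 2)]
    with t ht
  exact (inv_sqrt_one_add_sub_eq ht.1 ht.2).symm

/-- As `x → 0`, the difference `√2/√(1 + x⁴/4) − √2·(1 − x⁴/8)` is `O(x⁸)`:
the reciprocal LayerNorm standard deviation `1/σ(E_quad(x))` equals
`√2·(1 − x⁴/8)` up to eighth-order error, a strictly better approximation
order than the `O(x⁴)` error obtained for the linear embedding. -/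
theorem equad_inv_std_isBigO :
    (fun x : ℝ => Real.sqrt 2 / Real.sqrt (1 + x ^ 4 / 4) - Real.sqrt 2 * (1 - x ^ 4 / 8))
      =O[nhds (0 : ℝ)] (fun x : ℝ => x ^ 8) := by
  have hquarter : Tendsto (fun x : ℝ => x ^ 4 / 4) (nhds 0) (nhds 0) := by
    simpa using ((continuous_pow 4).div_const 4).tendsto (0 : ℝ)
  have hsq : (fun x : ℝ => (x ^ 4 / 4) ^ 2) =O[nhds 0] fun x => x ^ 8 :=
    isBigO_of_le _ fun x => by
      rw [Real.norm_of_nonneg (by positivity), Real.norm_of_nonneg (by positivity)]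
      nlinarith [pow_nonneg (sq_nonneg x) 4]
  refine (((inv_sqrt_one_add_sub_isBigO.comp_tendsto hquarter).const_mul_left √2).trans
    hsq).congr_left fun x => ?_
  simp only [Function.comp_apply]
  ring
end

section
/- As (x, y) → (0, 0) in ℝ², the difference [4 − 2(x − y)² + x²y²]/√((1 + x⁴/4)(1 + y⁴/4)) − (4 − 2(x − y)²) is O(‖(x, y)‖⁴); that is, the dot product of layer-normalized quadratic embeddings LN(E_quad(x)) · LN(E_quad(y)) equals the Gaussian-filter quadratic −2(x − y)² + 4 up to fourth-order error in the coordinates. -/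
open Asymptotics Filter Topology

/-! Write `s = √((1 + x⁴/4)(1 + y⁴/4))`, `N` for the numerator and `Q = 4 − 2(x − y)²`.
Then `N / s − Q = (N − Q) + N (s⁻¹ − 1)`, where `N − Q = x²y²` is quartic, `N` is bounded,
and `s⁻¹ − 1 = O(s² − 1)` because `t ↦ t^{-1/2}` is differentiable at `1`, while
`s² − 1 = x⁴/4 + y⁴/4 + x⁴y⁴/16` is quartic as well. -/

section

variable {α : Type*} {l : Filter α}

lemma isBigO_inv_sqrt_sub_one {b : α → ℝ} (hb : Tendsto b l (𝓝 1)) :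
    (fun x => (√(b x))⁻¹ - 1) =O[l] fun x => b x - 1 := by
  have hd : DifferentiableAt ℝ (fun t : ℝ => (√t)⁻¹) 1 :=
    (differentiableAt_id.sqrt one_ne_zero).inv (by simp)
  simpa [Function.comp_def] using hd.isBigO_sub.comp_tendsto hb

lemma isBigO_div_sub {N Q s g : α → ℝ} (hN : N =O[l] fun _ => (1 : ℝ))
    (hNQ : (fun x => N x - Q x) =O[l] g) (hs : (fun x => (s x)⁻¹ - 1) =O[l] g) :
    (fun x => N x / s x - Q x) =O[l] g :=
  (hNQ.add ((hN.mul hs).congr_right fun x => one_mul (g x))).congr_left fun x => by ring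

lemma isBigO_one_add_mul_one_add_sub_one {u v g : α → ℝ} (hu : u =O[l] g) (hv : v =O[l] g)
    (hv_bdd : v =O[l] fun _ => (1 : ℝ)) :
    (fun x => (1 + u x) * (1 + v x) - 1) =O[l] g :=
  ((hu.add hv).add ((hu.mul hv_bdd).congr_right fun x => mul_one (g x))).congr_left
    fun x => by ring

end

lemma isBigO_fst_pow {E F : Type*} [SeminormedRing E] [SeminormedAddCommGroup F]
    {l : Filter (E × F)} (n : ℕ) : (fun p : E × F => p.1 ^ n) =O[l] fun p => ‖p‖ ^ n :=
  (isBigO_fst_prod' (f' := id)).norm_right.pow n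

lemma isBigO_snd_pow {E F : Type*} [SeminormedAddCommGroup E] [SeminormedRing F]
    {l : Filter (E × F)} (n : ℕ) : (fun p : E × F => p.2 ^ n) =O[l] fun p => ‖p‖ ^ n :=
  (isBigO_snd_prod' (f' := id)).norm_right.pow n

/-- As `(x, y) → (0, 0)` in `ℝ²`, the difference
`[4 − 2(x − y)² + x²y²]/√((1 + x⁴/4)(1 + y⁴/4)) − (4 − 2(x − y)²)` is `O(‖(x, y)‖⁴)`:
the dot product of layer-normalized quadratic embeddings equals the
Gaussian-filter quadratic `−2(x − y)² + 4` up to fourth-order error. -/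
theorem equad_dot_isBigO_fourth_order :
    (fun p : ℝ × ℝ =>
        (4 - 2 * (p.1 - p.2) ^ 2 + p.1 ^ 2 * p.2 ^ 2) /
            Real.sqrt ((1 + p.1 ^ 4 / 4) * (1 + p.2 ^ 4 / 4)) -
          (4 - 2 * (p.1 - p.2) ^ 2)) =O[nhds (0 : ℝ × ℝ)]
      (fun p : ℝ × ℝ => ‖p‖ ^ 4) := by
  have hnum : (fun p : ℝ × ℝ => 4 - 2 * (p.1 - p.2) ^ 2 + p.1 ^ 2 * p.2 ^ 2) =O[𝓝 0]
      fun _ => (1 : ℝ) :=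
    (Continuous.tendsto (by fun_prop) 0).isBigO_one ℝ
  have hmixed : (fun p : ℝ × ℝ => p.1 ^ 2 * p.2 ^ 2) =O[𝓝 0] fun p => ‖p‖ ^ 4 :=
    ((isBigO_fst_pow 2).mul (isBigO_snd_pow 2)).congr_right fun p => (pow_add _ 2 2).symm
  have hprod : Tendsto (fun p : ℝ × ℝ => (1 + p.1 ^ 4 / 4) * (1 + p.2 ^ 4 / 4)) (𝓝 0) (𝓝 1) := by
    simpa using (Continuous.tendsto (by fun_prop :
      Continuous fun p : ℝ × ℝ => (1 + p.1 ^ 4 / 4) * (1 + p.2 ^ 4 / 4)) 0)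
  have hprod_sub_one :
      (fun p : ℝ × ℝ => (1 + p.1 ^ 4 / 4) * (1 + p.2 ^ 4 / 4) - 1) =O[𝓝 0] fun p => ‖p‖ ^ 4 :=
    isBigO_one_add_mul_one_add_sub_one
      (((isBigO_fst_pow 4).const_mul_left 4⁻¹).congr_left fun p => by ring)
      (((isBigO_snd_pow 4).const_mul_left 4⁻¹).congr_left fun p => by ring)
      ((Continuous.tendsto (by fun_prop : Continuous fun p : ℝ × ℝ => p.2 ^ 4 / 4) 0).isBigO_one ℝ)
  exact isBigO_div_sub hnum (hmixed.congr_left fun p => by ring)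
    ((isBigO_inv_sqrt_sub_one hprod).trans hprod_sub_one)
end
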